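/- arXiv:2507.01133 — 2 statements merged into one kernel-verified Lean document; each statement's English description precedes it below -/
import Mathlib

section
/- Every strong Kurepa tree contains an Aronszajn subtree. -/
noncomputable section

/-- The ordinal ω₁. -/
def w1 : Ordinal.{0} := (Cardinal.aleph 1).ord

/-- A binary sequence with ordinal domain: an element of `2^{≤Ord}`.
Values beyond the domain are normalized to `false`. -/
structure BSeq where
  dom : Ordinal.{0}
  val : Ordinal.{0} → Bool
  norm : ∀ i, dom ≤ i → val i = false

namespace BSeq

/-- `s.Ext t` means `s` is an initial segment of `t` (i.e. `s ⊆ t` as functions). -/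
def Ext (s t : BSeq) : Prop := s.dom ≤ t.dom ∧ ∀ i < s.dom, s.val i = t.val i

/-- The empty sequence. -/
def nil : BSeq := ⟨0, fun _ => false, fun _ _ => rfl⟩

/-- Restriction of a sequence to (its intersection with) an ordinal `α`. -/
def restrict (s : BSeq) (α : Ordinal) : BSeq where
  dom := min α s.dom
  val := fun i => if i < α ∧ i < s.dom then s.val i else false
  norm := by
    intro i hi
    have hc : ¬(i < α ∧ i < s.dom) := by
      rintro ⟨h1, h2⟩
      rcases min_le_iff.mp hi with h | h
      · exact absurd h1 (not_lt.mpr h)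
      · exact absurd h2 (not_lt.mpr h)
    simp [hc]

end BSeq

/-- `b` is a cofinal branch of the tree `(T, <)` with height function `ht`:
a downward-closed chain meeting every level below ω₁. -/
def IsBranch {T : Type} [PartialOrder T] (ht : T → Ordinal) (b : Set T) : Prop :=
  IsChain (· ≤ ·) b ∧ (∀ x ∈ b, ∀ y, y < x → y ∈ b) ∧ ∀ α < w1, ∃ x ∈ b, ht x = α

/-- `(T, <)` together with the height function `ht` is a set-theoretic tree of
height ω₁: heights are countable ordinals, the strict order raises height, the
predecessors of any node are linearly ordered with exactly one on each lower
level, and every level below ω₁ is nonempty. -/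
structure IsTreeW1 {T : Type} [PartialOrder T] (ht : T → Ordinal) : Prop where
  ht_lt : ∀ x : T, ht x < w1
  lt_ht : ∀ {x y : T}, x < y → ht x < ht y
  pred_linear : ∀ {x y z : T}, x < z → y < z → x ≤ y ∨ y ≤ x
  pred_exists : ∀ z : T, ∀ α < ht z, ∃ x : T, x < z ∧ ht x = α
  height_w1 : ∀ α < w1, ∃ x : T, ht x = α

/-- The space of cofinal branches of the tree. -/
abbrev Branches {T : Type} [PartialOrder T] (ht : T → Ordinal) : Type :=
  {b : Set T // IsBranch ht b}

/-- The cone topology on the space of cofinal branches. -/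
def coneTop {T : Type} [PartialOrder T] (ht : T → Ordinal) :
    TopologicalSpace (Branches ht) :=
  TopologicalSpace.generateFrom
    {S : Set (Branches ht) | ∃ x : T, S = {b : Branches ht | x ∈ b.1}}

/-- The space `2^{ω₁}`. -/
abbrev FullSeq : Type 1 := {g : BSeq // g.dom = w1}

/-- The cone topology on `2^{ω₁}`: basic open sets are determined by elements of `2^{<ω₁}`. -/
def seqTop : TopologicalSpace FullSeq :=
  TopologicalSpace.generateFrom
    {S : Set FullSeq | ∃ s : BSeq, s.dom < w1 ∧ S = {g : FullSeq | s.Ext g.1}}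

/-! ### Auxiliary material -/

theorem w1_pos : (0 : Ordinal) < w1 := by
  rw [w1, Cardinal.lt_ord]
  simpa using Cardinal.aleph0_lt_aleph_one.trans_le' Cardinal.aleph0_pos.le

theorem omega0_lt_w1 : Ordinal.omega0 < w1 := by
  rw [w1, ← Cardinal.ord_aleph0]
  exact Cardinal.ord_lt_ord.mpr Cardinal.aleph0_lt_aleph_one

theorem w1_isLimit : Order.IsSuccLimit w1 :=
  Cardinal.isSuccLimit_ord Cardinal.aleph0_lt_aleph_one.le

theorem add_one_lt_w1 {a : Ordinal} (h : a < w1) : a + 1 < w1 := by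
  rw [Ordinal.add_one_eq_succ]
  exact w1_isLimit.succ_lt h

namespace Stmt5Aux

variable {T : Type} [PartialOrder T] {ht : T → Ordinal}

theorem mem_of_le {c : Branches ht} {x y : T} (hxy : x ≤ y) (hy : y ∈ c.1) : x ∈ c.1 := by
  rcases hxy.lt_or_eq with h | rfl
  · exact c.2.2.1 y hy x h
  · exact hy

/-- Every open set of the cone topology containing a branch contains a basic cone
around some node of that branch. -/
theorem cone_lemma {O : Set (Branches ht)}
    (hO : TopologicalSpace.GenerateOpen
      {S : Set (Branches ht) | ∃ x : T, S = {b : Branches ht | x ∈ b.1}} O)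
    {b : Branches ht} (hb : b ∈ O) :
    ∃ x ∈ b.1, ∀ c : Branches ht, x ∈ c.1 → c ∈ O := by
  revert hb
  induction hO with
  | basic S hS =>
      intro hb
      obtain ⟨x, rfl⟩ := hS
      exact ⟨x, hb, fun c hc => hc⟩
  | univ =>
      intro _
      obtain ⟨x, hx, -⟩ := b.2.2.2 0 w1_pos
      exact ⟨x, hx, fun c _ => trivial⟩
  | inter S1 S2 h1 h2 ih1 ih2 =>
      intro hb
      obtain ⟨x1, hx1, hc1⟩ := ih1 hb.1
      obtain ⟨x2, hx2, hc2⟩ := ih2 hb.2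
      rcases eq_or_ne x1 x2 with rfl | hne
      · exact ⟨x1, hx1, fun c hc => ⟨hc1 c hc, hc2 c hc⟩⟩
      · rcases b.2.1 hx1 hx2 hne with h | h
        · exact ⟨x2, hx2, fun c hc => ⟨hc1 c (mem_of_le h hc), hc2 c hc⟩⟩
        · exact ⟨x1, hx1, fun c hc => ⟨hc1 c hc, hc2 c (mem_of_le h hc)⟩⟩
  | sUnion S hS ih =>
      intro hb
      obtain ⟨O', hO', hbO'⟩ := hb
      obtain ⟨x, hx, hc⟩ := ih O' hO' hbO'
      exact ⟨x, hx, fun c hcc => ⟨O', hO', hc c hcc⟩⟩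

/-- `x` decides `α` (w.r.t. `F`): all branches through `x` have the same `F`-value below `α`. -/
def Decides (F : Branches ht → FullSeq) (x : T) (α : Ordinal) : Prop :=
  ∀ c c' : Branches ht, x ∈ c.1 → x ∈ c'.1 → ∀ i < α, (F c).1.val i = (F c').1.val i

/-- Continuity: every branch contains, for each `α < ω₁`, a node deciding `α`. -/
theorem exists_decides (F : Branches ht → FullSeq)
    (hFc : @Continuous _ _ (coneTop ht) seqTop F) (b : Branches ht)
    {α : Ordinal} (hα : α < w1) :
    ∃ x ∈ b.1, Decides F x α := by
  set s := (F b).1.restrict α with hs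
  have hdomF : (F b).1.dom = w1 := (F b).2
  have hsdom : s.dom = α := by
    rw [hs]
    show min α (F b).1.dom = α
    rw [hdomF]
    exact min_eq_left hα.le
  have hsval : ∀ i < α, s.val i = (F b).1.val i := by
    intro i hi
    show (if i < α ∧ i < (F b).1.dom then (F b).1.val i else false) = (F b).1.val i
    rw [if_pos ⟨hi, by rw [hdomF]; exact hi.trans hα⟩]
  have hV : TopologicalSpace.GenerateOpen
      {S : Set FullSeq | ∃ t : BSeq, t.dom < w1 ∧ S = {g : FullSeq | t.Ext g.1}}
      {g : FullSeq | s.Ext g.1} :=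
    TopologicalSpace.GenerateOpen.basic _ ⟨s, by rw [hsdom]; exact hα, rfl⟩
  have hpre : (coneTop ht).IsOpen (F ⁻¹' {g : FullSeq | s.Ext g.1}) :=
    @Continuous.isOpen_preimage _ _ (coneTop ht) seqTop F hFc _ hV
  have hbmem : b ∈ F ⁻¹' {g : FullSeq | s.Ext g.1} := by
    refine ⟨?_, ?_⟩
    · rw [hsdom, hdomF]; exact hα.le
    · intro i hi
      exact hsval i (hsdom ▸ hi)
  obtain ⟨x, hx, hcone⟩ := cone_lemma hpre hbmem
  refine ⟨x, hx, ?_⟩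
  intro c c' hc hc' i hi
  have e1 := (hcone c hc).2 i (by rw [hsdom]; exact hi)
  have e2 := (hcone c' hc').2 i (by rw [hsdom]; exact hi)
  rw [← e1, ← e2]

theorem decides_of_lt {F : Branches ht → FullSeq} {x y : T} (hxy : y < x) {α : Ordinal}
    (h : Decides F y α) : Decides F x α := fun c c' hc hc' =>
  h c c' (c.2.2.1 x hc y hxy) (c'.2.2.1 x hc' y hxy)

end Stmt5Aux

open Stmt5Aux in
/-- every strong Kurepa tree (a Kurepa tree `T` such that
`2^{ω₁}` is a continuous image of `[T]` with respect to the cone topologies)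
contains an Aronszajn subtree. -/
theorem stmt5 {T : Type} [PartialOrder T] (ht : T → Ordinal) (htree : IsTreeW1 ht)
    (hcount : ∀ α : Ordinal, {x : T | ht x = α}.Countable)
    (hkurepa : Cardinal.aleph 2 ≤ Cardinal.mk (Branches ht))
    (hstrong : ∃ F : Branches ht → FullSeq,
      @Continuous _ _ (coneTop ht) seqTop F ∧ Function.Surjective F) :
    ∃ U : Set T, ¬ U.Countable ∧ (∀ x ∈ U, ∀ y : T, y < x → y ∈ U) ∧
      ∀ b : Set T, IsBranch ht b → ¬ b ⊆ U := by
  classical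
  obtain ⟨F, hFc, hFs⟩ := hstrong
  by_cases hU : ∀ α, α < w1 → {x : T | ¬ Decides F x α}.Countable
  · -- all "undecided" sets countable: contradiction with surjectivity
    exfalso
    -- bound the heights of the undecided sets
    have hγ : ∀ α : Ordinal, ∃ γ, γ < w1 ∧ (α < w1 → ∀ x : T, γ ≤ ht x → Decides F x α) := by
      intro α
      by_cases hα : α < w1
      · have hc := hU α hα
        haveI := hc.to_subtype
        refine ⟨⨆ x : {x : T | ¬ Decides F x α}, (ht x.1 + 1), ?_, ?_⟩
        · refine Cardinal.iSup_lt_ord_of_isRegular Cardinal.isRegular_aleph_one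
            (Cardinal.mk_le_aleph0.trans_lt Cardinal.aleph0_lt_aleph_one) ?_
          intro i
          exact add_one_lt_w1 (htree.ht_lt i.1)
        · intro _ x hx
          by_contra hnd
          have hle := Ordinal.le_iSup
            (fun x : {x : T | ¬ Decides F x α} => ht x.1 + 1) ⟨x, hnd⟩
          have : ht x + 1 ≤ ht x := hle.trans hx
          exact absurd this (by rw [Ordinal.add_one_eq_succ]; exact not_le.mpr (Order.lt_succ _))
      · exact ⟨0, w1_pos, fun h => absurd h hα⟩
    choose γ hγ1 hγ2 using hγ
    -- a closure ordinal δ, ω ≤ δ < ω₁, closed under γ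
    set G : Ordinal → Ordinal := fun β =>
      max (β + 1) (⨆ i : β.ToType, γ (((Ordinal.ToType.mk (o := β))).symm i).1) with hG
    have hG_lt : ∀ β < w1, G β < w1 := by
      intro β hβ
      refine max_lt (add_one_lt_w1 hβ) ?_
      refine Cardinal.iSup_lt_ord_of_isRegular Cardinal.isRegular_aleph_one ?_ fun i => hγ1 _
      rw [Cardinal.mk_toType]
      exact Cardinal.lt_ord.mp hβ
    have hG_ge : ∀ β, ∀ α < β, γ α ≤ G β := by
      intro β α hα
      have hle := Ordinal.le_iSup
        (fun i : β.ToType => γ (((Ordinal.ToType.mk (o := β))).symm i).1)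
        ((Ordinal.ToType.mk (o := β)) ⟨α, hα⟩)
      simp only [OrderIso.symm_apply_apply] at hle
      exact hle.trans (le_max_right _ _)
    set d : ℕ → Ordinal := fun n => Nat.rec Ordinal.omega0 (fun _ ih => G ih) n with hd
    have hd_lt : ∀ n, d n < w1 := by
      intro n
      induction n with
      | zero => exact omega0_lt_w1
      | succ n ih => exact hG_lt _ ih
    have hd_succ : ∀ n, d n < d (n + 1) := by
      intro n
      have : d n < d n + 1 := by
        rw [Ordinal.add_one_eq_succ]; exact Order.lt_succ _
      exact this.trans_le (le_max_left _ _)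
    set δ : Ordinal := ⨆ n, d n with hδ
    have hδ_lt : δ < w1 :=
      Cardinal.iSup_lt_ord_of_isRegular Cardinal.isRegular_aleph_one
        (by rw [Cardinal.mk_nat]; exact Cardinal.aleph0_lt_aleph_one) hd_lt
    have hωδ : Ordinal.omega0 ≤ δ := Ordinal.le_iSup d 0
    have hclosed : ∀ α < δ, γ α ≤ δ ∧ α + 1 < δ := by
      intro α hα
      obtain ⟨n, hn⟩ : ∃ n, α < d n := by
        by_contra hno
        push_neg at hno
        exact absurd (Ordinal.iSup_le hno) (not_le.mpr hα)
      constructor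
      · exact (hG_ge (d n) α hn).trans (Ordinal.le_iSup d (n + 1))
      · have h1 : α + 1 ≤ d n := by
          rw [Ordinal.add_one_eq_succ]; exact Order.succ_le_of_lt hn
        exact (h1.trans_lt (hd_succ n)).trans_le (Ordinal.le_iSup d (n + 1))
    -- every node at level δ decides δ
    have hDδ : ∀ x : T, ht x = δ → Decides F x δ := by
      intro x hx c c' hc hc' i hi
      have h2 := hclosed i hi
      have h3 : γ (i + 1) ≤ δ := (hclosed (i + 1) h2.2).1
      have hdec : Decides F x (i + 1) :=
        hγ2 (i + 1) (h2.2.trans hδ_lt) x (by rw [hx]; exact h3)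
      exact hdec c c' hc hc' i (by rw [Ordinal.add_one_eq_succ]; exact Order.lt_succ _)
    -- encode elements of 2^ω into FullSeq
    have hg : ∀ f : ℕ → Bool, ∃ g : FullSeq, ∀ n : ℕ, g.1.val n = f n := by
      intro f
      refine ⟨⟨⟨w1, fun i => if h : ∃ n : ℕ, (n : Ordinal) = i then f h.choose else false,
        ?_⟩, rfl⟩, ?_⟩
      · intro i hi
        show (if h : ∃ n : ℕ, (n : Ordinal) = i then f h.choose else false) = false
        rw [dif_neg]
        rintro ⟨n, rfl⟩
        exact absurd ((Ordinal.nat_lt_omega0 n).trans omega0_lt_w1) (not_lt.mpr hi)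
      · intro n
        have hex : ∃ m : ℕ, (m : Ordinal) = (n : Ordinal) := ⟨n, rfl⟩
        show (if h : ∃ m : ℕ, (m : Ordinal) = (n : Ordinal) then f h.choose else false) = f n
        rw [dif_pos hex]
        congr 1
        exact Nat.cast_inj.mp hex.choose_spec
    choose g hgval using hg
    -- for each f : 2^ω, a node at level δ through which all branches read off f
    have hx : ∀ f : ℕ → Bool, ∃ x : T, ht x = δ ∧ (∃ c : Branches ht, x ∈ c.1) ∧
        ∀ n : ℕ, ∀ c : Branches ht, x ∈ c.1 → (F c).1.val n = f n := by
      intro f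
      obtain ⟨b, hbF⟩ := hFs (g f)
      obtain ⟨x, hxb, hxht⟩ := b.2.2.2 δ hδ_lt
      refine ⟨x, hxht, ⟨b, hxb⟩, ?_⟩
      intro n c hc
      have hn : (n : Ordinal) < δ := (Ordinal.nat_lt_omega0 n).trans_le hωδ
      have := hDδ x hxht c b hc hxb n hn
      rw [this, hbF]
      exact hgval f n
    choose Φ hΦht hΦbr hΦval using hx
    have hinj : Function.Injective Φ := by
      intro f f' he
      funext n
      obtain ⟨c, hcmem⟩ := hΦbr f
      have h1 := hΦval f n c hcmem
      have h2 := hΦval f' n c (he ▸ hcmem)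
      rw [← h1, ← h2]
    -- contradiction: 2^ω injects into a countable level
    haveI := (hcount δ).to_subtype
    have hcnt : Countable (ℕ → Bool) := by
      have hinj2 : Function.Injective
          (fun f : ℕ → Bool => (⟨Φ f, hΦht f⟩ : {x : T | ht x = δ})) := by
        intro f f' h
        exact hinj (congrArg Subtype.val h)
      exact hinj2.countable
    have hle : Cardinal.mk (ℕ → Bool) ≤ Cardinal.aleph0 := Cardinal.mk_le_aleph0
    rw [Cardinal.mk_arrow] at hle
    simp only [Cardinal.mk_bool, Cardinal.mk_nat, Cardinal.lift_id, Cardinal.lift_two,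
      Cardinal.lift_aleph0] at hle
    exact absurd hle (not_le.mpr (Cardinal.cantor _))
  · -- some undecided set is uncountable: it is an Aronszajn subtree
    push_neg at hU
    obtain ⟨α, hα, hunc⟩ := hU
    refine ⟨{x : T | ¬ Decides F x α}, hunc, ?_, ?_⟩
    · intro x hx y hyx hdec
      exact hx (decides_of_lt hyx hdec)
    · intro b hbB hsub
      obtain ⟨x, hxb, hdec⟩ := exists_decides F hFc ⟨b, hbB⟩ hα
      exact hsub hxb hdec
end
end

section
/- Let (t,h) be a condition in the poset P (where t is a standard binary countable tree and h : t → 2^{<ω₁} satisfies h(∅)=∅, monotonicity, continuity at limits, and every value of h on t is attained on top(t)). Then there exists a condition (u,k) ≤ (t,h) with δ_u = δ_t + 1 such that for every x ∈ u ∩ 2^{<δ_u} there exist distinct z₀, z₁ ∈ top(u) with x ⊆ z₀, x ⊆ z₁, and k(z₀) = k(z₁) = k(x). -/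
noncomputable section

/-- `SBCT t δ` : `t` is a standard binary countable tree with top level `δ`:
a countable downward-closed subtree of `2^{≤δ}` (with `δ < ω₁`) containing the
empty sequence, in which every node of height `< δ` has both one-step
extensions, and every node extends to a node of height `δ`. -/
def SBCT (t : Set BSeq) (δ : Ordinal) : Prop :=
  δ < w1 ∧ t.Countable ∧ BSeq.nil ∈ t ∧
  (∀ x ∈ t, x.dom ≤ δ) ∧
  (∀ x ∈ t, ∀ α : Ordinal, x.restrict α ∈ t) ∧
  (∀ x ∈ t, x.dom < δ → ∀ i : Bool, ∃ z ∈ t, z.dom = x.dom + 1 ∧ x.Ext z ∧ z.val x.dom = i) ∧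
  (∀ x ∈ t, ∃ y ∈ t, y.dom = δ ∧ x.Ext y)

/-- `u` end-extends `t`: `δt ≤ δu` and `u ∩ 2^{≤δt} = t`. -/
def EndExt (t : Set BSeq) (δt : Ordinal) (u : Set BSeq) (δu : Ordinal) : Prop :=
  δt ≤ δu ∧ ∀ x : BSeq, (x ∈ u ∧ x.dom ≤ δt) ↔ x ∈ t

/-- A condition in the poset `P`: a standard binary countable tree `t` with top
level `δ` together with `h : t → 2^{<ω₁}` satisfying `h(∅) = ∅`, monotonicity,
continuity at limit heights (h(z) is the least upper bound of the values at
proper initial segments), and attainment of every `h`-value on the top level. -/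
def PCond (t : Set BSeq) (δ : Ordinal) (h : BSeq → BSeq) : Prop :=
  SBCT t δ ∧
  h BSeq.nil = BSeq.nil ∧
  (∀ x ∈ t, (h x).dom < w1) ∧
  (∀ x ∈ t, ∀ y ∈ t, x.Ext y → (h x).Ext (h y)) ∧
  (∀ z ∈ t, Order.IsSuccLimit z.dom →
    ∀ s : BSeq, (∀ y ∈ t, y.Ext z → y ≠ z → (h y).Ext s) → (h z).Ext s) ∧
  (∀ x ∈ t, ∃ y ∈ t, y.dom = δ ∧ x.Ext y ∧ h x = h y)

/-- The ordering of the poset `P`: `(u,k) ≤ (t,h)` iff `u` end-extends `t` and `k` extends `h`. -/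
def PLe (u : Set BSeq) (δu : Ordinal) (k : BSeq → BSeq)
    (t : Set BSeq) (δt : Ordinal) (h : BSeq → BSeq) : Prop :=
  EndExt t δt u δu ∧ ∀ x ∈ t, k x = h x

lemma BSeq.eq_of {s t : BSeq} (hd : s.dom = t.dom)
    (hv : ∀ i < s.dom, s.val i = t.val i) : s = t := by
  cases s with | mk ds vs ns =>
  cases t with | mk dt vt nt =>
  simp only at hd hv ⊢
  subst hd
  congr 1
  funext i
  rcases lt_or_ge i ds with hi | hi
  · exact hv i hi
  · rw [ns i hi, nt i hi]

lemma BSeq.ext_refl (s : BSeq) : s.Ext s := ⟨le_rfl, fun _ _ => rfl⟩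

lemma BSeq.ext_trans {a b c : BSeq} (h1 : a.Ext b) (h2 : b.Ext c) : a.Ext c :=
  ⟨h1.1.trans h2.1, fun i hi => (h1.2 i hi).trans (h2.2 i (lt_of_lt_of_le hi h1.1))⟩

lemma BSeq.restrict_eq_self {s : BSeq} {α : Ordinal} (h : s.dom ≤ α) :
    s.restrict α = s := by
  apply BSeq.eq_of
  · exact min_eq_right h
  · intro i hi
    have hi' : i < s.dom := by
      simpa [BSeq.restrict, min_eq_right h] using hi
    simp [BSeq.restrict, hi', lt_of_lt_of_le hi' h]

lemma BSeq.restrict_ext {x y : BSeq} (α : Ordinal) (h : x.Ext y) :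
    (x.restrict α).Ext (y.restrict α) := by
  refine ⟨min_le_min le_rfl h.1, ?_⟩
  intro i hi
  have h1 : i < α := lt_of_lt_of_le hi (min_le_left _ _)
  have h2 : i < x.dom := lt_of_lt_of_le hi (min_le_right _ _)
  have h3 : i < y.dom := lt_of_lt_of_le h2 h.1
  simp [BSeq.restrict, h1, h2, h3, h.2 i h2]

/-- One-step extension of a sequence by a bit `b`. -/
def ext1 (y : BSeq) (b : Bool) : BSeq where
  dom := y.dom + 1
  val := fun j => if j = y.dom then b else y.val j
  norm := by
    intro i hi
    have h1 : y.dom < i := by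
      rw [Ordinal.add_one_eq_succ] at hi
      exact Order.succ_le_iff.mp hi
    show (if i = y.dom then b else y.val i) = false
    rw [if_neg (ne_of_gt h1), y.norm i h1.le]

lemma ext1_dom (y : BSeq) (b : Bool) : (ext1 y b).dom = y.dom + 1 := rfl

lemma ext1_val_top (y : BSeq) (b : Bool) : (ext1 y b).val y.dom = b := if_pos rfl

lemma dom_lt_ext1_dom (y : BSeq) : y.dom < y.dom + 1 := by
  rw [Ordinal.add_one_eq_succ]; exact Order.lt_succ _

lemma ext1_ext (y : BSeq) (b : Bool) : y.Ext (ext1 y b) := by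
  refine ⟨le_of_lt (dom_lt_ext1_dom y), ?_⟩
  intro i hi
  show y.val i = if i = y.dom then b else y.val i
  rw [if_neg (ne_of_lt hi)]

lemma ext1_restrict (y : BSeq) (b : Bool) {α : Ordinal} (h : α ≤ y.dom) :
    (ext1 y b).restrict α = y.restrict α := by
  apply BSeq.eq_of
  · show min α (y.dom + 1) = min α y.dom
    rw [min_eq_left (h.trans (le_of_lt (dom_lt_ext1_dom y))), min_eq_left h]
  · intro i hi
    have hiα : i < α := lt_of_lt_of_le hi (min_le_left _ _)
    have h2 : i < y.dom := lt_of_lt_of_le hiα h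
    have h3 : i < (ext1 y b).dom := h2.trans (dom_lt_ext1_dom y)
    show (if i < α ∧ i < (ext1 y b).dom then (ext1 y b).val i else false)
        = (if i < α ∧ i < y.dom then y.val i else false)
    rw [if_pos ⟨hiα, h3⟩, if_pos ⟨hiα, h2⟩]
    show (if i = y.dom then b else y.val i) = y.val i
    rw [if_neg (ne_of_lt h2)]

lemma ext1_restrict_base {y : BSeq} {δ : Ordinal} (b : Bool) (hy : y.dom = δ) :
    (ext1 y b).restrict δ = y := by
  rw [ext1_restrict y b (le_of_eq hy.symm), BSeq.restrict_eq_self (le_of_eq hy)]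

/-- every condition `(t,h)` of `P` has an extension `(u,k)` with
`δ_u = δ_t + 1` in which every non-top node `x` lies below two distinct top
nodes on which `k` takes the value `k(x)`. -/
theorem stmt7 (t : Set BSeq) (δ : Ordinal) (h : BSeq → BSeq)
    (hP : PCond t δ h) :
    ∃ (u : Set BSeq) (k : BSeq → BSeq), PCond u (δ + 1) k ∧ PLe u (δ + 1) k t δ h ∧
      ∀ x ∈ u, x.dom < δ + 1 →
        ∃ z₀ ∈ u, ∃ z₁ ∈ u, z₀ ≠ z₁ ∧ z₀.dom = δ + 1 ∧ z₁.dom = δ + 1 ∧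
          x.Ext z₀ ∧ x.Ext z₁ ∧ k z₀ = k x ∧ k z₁ = k x := by
  obtain ⟨⟨hδ, hcnt, hnil, hdom, hres, hsplit, htop⟩, hhn, hhd, hmono, hlim, hatt⟩ := hP
  set u : Set BSeq := t ∪ {z | ∃ y ∈ t, y.dom = δ ∧ ∃ b : Bool, z = ext1 y b} with hu
  set k : BSeq → BSeq := fun z => h (z.restrict δ) with hk
  have hδδ : δ < δ + 1 := by
    rw [Ordinal.add_one_eq_succ]; exact Order.lt_succ δ
  have hk_t : ∀ x ∈ t, k x = h x := by
    intro x hx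
    show h (x.restrict δ) = h x
    rw [BSeq.restrict_eq_self (hdom x hx)]
  have hnew_dom : ∀ z ∈ u, z ∉ t → z.dom = δ + 1 := by
    rintro z (hz | ⟨y, hy, hyd, b, rfl⟩) hzt
    · exact absurd hz hzt
    · rw [ext1_dom, hyd]
  have memu_of_le : ∀ x ∈ u, x.dom ≤ δ → x ∈ t := by
    intro x hx hxd
    by_contra hxt
    rw [hnew_dom x hx hxt] at hxd
    exact absurd hxd (not_le.mpr hδδ)
  have hext1_mem : ∀ y ∈ t, y.dom = δ → ∀ b : Bool, ext1 y b ∈ u :=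
    fun y hy hyd b => Or.inr ⟨y, hy, hyd, b, rfl⟩
  have hres_u : ∀ x ∈ u, x.restrict δ ∈ t := by
    rintro x (hx | ⟨y, hy, hyd, b, rfl⟩)
    · exact hres x hx δ
    · rw [ext1_restrict_base b hyd]; exact hy
  have hk_new : ∀ y ∈ t, y.dom = δ → ∀ b : Bool, k (ext1 y b) = h y := by
    intro y hy hyd b
    show h ((ext1 y b).restrict δ) = h y
    rw [ext1_restrict_base b hyd]
  refine ⟨u, k, ⟨⟨?_, ?_, Or.inl hnil, ?_, ?_, ?_, ?_⟩, ?_, ?_, ?_, ?_, ?_⟩, ⟨⟨le_of_lt hδδ, ?_⟩, hk_t⟩, ?_⟩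
  · -- δ + 1 < w1
    have hw : Order.IsSuccLimit (Cardinal.aleph 1).ord := Cardinal.isSuccLimit_ord (Cardinal.aleph0_le_aleph 1)
    rw [Ordinal.add_one_eq_succ]
    exact hw.succ_lt hδ
  · -- countable
    apply hcnt.union
    have : {z | ∃ y ∈ t, y.dom = δ ∧ ∃ b : Bool, z = ext1 y b} ⊆
        (fun p : BSeq × Bool => ext1 p.1 p.2) '' (t ×ˢ (Set.univ : Set Bool)) := by
      rintro z ⟨y, hy, _, b, rfl⟩
      exact ⟨(y, b), ⟨hy, trivial⟩, rfl⟩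
    exact ((hcnt.prod Set.countable_univ).image _).mono this
  · -- dom bound
    rintro x (hx | ⟨y, hy, hyd, b, rfl⟩)
    · exact (hdom x hx).trans (le_of_lt hδδ)
    · rw [ext1_dom, hyd]
  · -- restrict closed
    rintro x (hx | ⟨y, hy, hyd, b, rfl⟩) α
    · exact Or.inl (hres x hx α)
    · rcases le_or_gt α δ with hα | hα
      · rw [ext1_restrict y b (hyd ▸ hα)]
        exact Or.inl (hres y hy α)
      · have : (ext1 y b).dom ≤ α := by
          rw [ext1_dom, hyd, Ordinal.add_one_eq_succ]
          exact Order.succ_le_iff.mpr hα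
        rw [BSeq.restrict_eq_self this]
        exact hext1_mem y hy hyd b
  · -- splitting
    intro x hx hxd i
    have hxle : x.dom ≤ δ := by
      rw [Ordinal.add_one_eq_succ] at hxd
      exact Order.lt_succ_iff.mp hxd
    have hxt : x ∈ t := memu_of_le x hx hxle
    rcases lt_or_eq_of_le hxle with hlt | heq
    · obtain ⟨z, hz, h1, h2, h3⟩ := hsplit x hxt hlt i
      exact ⟨z, Or.inl hz, h1, h2, h3⟩
    · exact ⟨ext1 x i, hext1_mem x hxt heq i, rfl, ext1_ext x i, ext1_val_top x i⟩
  · -- top extension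
    rintro x (hx | ⟨y, hy, hyd, b, rfl⟩)
    · obtain ⟨y, hy, hyd, hxy⟩ := htop x hx
      exact ⟨ext1 y false, hext1_mem y hy hyd false,
        by rw [ext1_dom, hyd], BSeq.ext_trans hxy (ext1_ext y false)⟩
    · exact ⟨ext1 y b, hext1_mem y hy hyd b, by rw [ext1_dom, hyd], BSeq.ext_refl _⟩
  · -- k nil
    show h (BSeq.nil.restrict δ) = BSeq.nil
    rw [BSeq.restrict_eq_self (zero_le (a := δ))]
    exact hhn
  · -- dom of k values
    intro x hx
    exact hhd _ (hres_u x hx)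
  · -- monotone
    intro x hx y hy hxy
    exact hmono _ (hres_u x hx) _ (hres_u y hy) (BSeq.restrict_ext δ hxy)
  · -- limit continuity
    intro z hz hzl s hs
    have hzt : z ∈ t := by
      by_contra hzt
      have hzd := hnew_dom z hz hzt
      rw [hzd, Ordinal.add_one_eq_succ] at hzl
      exact (Order.not_isSuccLimit_succ δ) hzl
    rw [hk_t z hzt]
    apply hlim z hzt hzl s
    intro y hy hyz hne
    have := hs y (Or.inl hy) hyz hne
    rwa [hk_t y hy] at this
  · -- attainment
    rintro x (hx | ⟨y, hy, hyd, b, rfl⟩)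
    · obtain ⟨y, hy, hyd, hxy, hxyh⟩ := hatt x hx
      refine ⟨ext1 y false, hext1_mem y hy hyd false, by rw [ext1_dom, hyd],
        BSeq.ext_trans hxy (ext1_ext y false), ?_⟩
      rw [hk_t x hx, hk_new y hy hyd false, hxyh]
    · exact ⟨ext1 y b, hext1_mem y hy hyd b, by rw [ext1_dom, hyd], BSeq.ext_refl _, rfl⟩
  · -- EndExt membership
    intro x
    constructor
    · rintro ⟨hx, hxd⟩
      exact memu_of_le x hx hxd
    · intro hx
      exact ⟨Or.inl hx, hdom x hx⟩
  · -- final clause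
    intro x hx hxd
    have hxle : x.dom ≤ δ := by
      rw [Ordinal.add_one_eq_succ] at hxd
      exact Order.lt_succ_iff.mp hxd
    have hxt : x ∈ t := memu_of_le x hx hxle
    obtain ⟨y, hy, hyd, hxy, hxyh⟩ := hatt x hxt
    refine ⟨ext1 y false, hext1_mem y hy hyd false, ext1 y true, hext1_mem y hy hyd true,
      ?_, by rw [ext1_dom, hyd], by rw [ext1_dom, hyd],
      BSeq.ext_trans hxy (ext1_ext y false), BSeq.ext_trans hxy (ext1_ext y true), ?_, ?_⟩
    · intro heq
      have := congrArg (fun w => w.val y.dom) heq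
      simp only [ext1_val_top] at this
      exact Bool.false_ne_true this
    · rw [hk_t x hxt, hk_new y hy hyd false, hxyh]
    · rw [hk_t x hxt, hk_new y hy hyd true, hxyh]
end
end
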